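/- arXiv:1306.6244 — 8 statements merged into one kernel-verified Lean document; each statement's English description precedes it below -/
import Mathlib

section
/- Let g ∈ U(3) and set T₁ = iσ₁, T₂ = iσ₂, T₃ = iσ₃ (Pauli matrices). Define Uᵢⱼ = gᵢⱼ · (Tᵢ ⊗ Tⱼ) ∈ M₂(ℂ) ⊗ M₂(ℂ) for 1 ≤ i,j ≤ 3. Then: (a) Σₖ Uᵢₖ Uⱼₖ* = δᵢⱼ · 1 and Σₖ Uₖᵢ* Uₖⱼ = δᵢⱼ · 1 (i.e., the 3×3 matrix (Uᵢⱼ) over M₄(ℂ) is unitary), and (b) Uᵢⱼ Uₖₗ = (-1)^{δᵢₖ + δⱼₗ} Uₖₗ Uᵢⱼ for all i,j,k,l. -/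
/-!
The matrices `Tₐ = iσₐ` are unitary and pairwise anticommute. Hence
`Uᵢₖ Uⱼₖ* = gᵢₖ conj(gⱼₖ) • (Tᵢ Tⱼ* ⊗ 1)`, and summing over `k` with `g g* = 1` gives `δᵢⱼ`
(columns likewise with `g* g = 1`). Commuting `Tᵢ ⊗ Tⱼ` past `Tₖ ⊗ Tₗ` costs one sign `-1` for
each tensor factor whose two indices differ, and `(-1)^(1-δᵢₖ) (-1)^(1-δⱼₗ) = (-1)^(δᵢₖ+δⱼₗ)`.
-/

open Kronecker Matrix

section Kronecker

variable {α m n : Type*} [CommRing α] [Fintype m] [Fintype n]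

lemma smul_kronecker_mul_smul_kronecker_comm {a b c d : α} {A B : Matrix m m α}
    {C D : Matrix n n α} (hAB : A * B = c • (B * A)) (hCD : C * D = d • (D * C)) :
    (a • (A ⊗ₖ C)) * (b • (B ⊗ₖ D)) = (c * d) • ((b • (B ⊗ₖ D)) * (a • (A ⊗ₖ C))) := by
  rw [smul_mul_smul_comm, smul_mul_smul_comm, ← mul_kronecker_mul, ← mul_kronecker_mul, hAB, hCD,
    smul_kronecker, kronecker_smul, smul_smul, smul_smul, smul_smul]
  congr 1
  ring

variable [StarRing α]

lemma smul_kronecker_mul_star_smul_kronecker (a b : α) (A C : Matrix m m α)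
    (B D : Matrix n n α) :
    (a • (A ⊗ₖ B)) * star (b • (C ⊗ₖ D)) = (a * star b) • ((A * star C) ⊗ₖ (B * star D)) := by
  rw [star_smul, smul_mul_smul_comm, star_eq_conjTranspose, conjTranspose_kronecker,
    ← mul_kronecker_mul]
  rfl

lemma star_smul_kronecker_mul_smul_kronecker (a b : α) (A C : Matrix m m α)
    (B D : Matrix n n α) :
    star (a • (A ⊗ₖ B)) * (b • (C ⊗ₖ D)) = (star a * b) • ((star A * C) ⊗ₖ (star B * D)) := by
  rw [star_smul, smul_mul_smul_comm, star_eq_conjTranspose, conjTranspose_kronecker,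
    ← mul_kronecker_mul]
  rfl

variable {ι : Type*} [Fintype ι] [DecidableEq ι] [DecidableEq n]

lemma sum_smul_kronecker_mul_star_eq_ite {T : ι → Matrix n n α} (hT : ∀ a, T a ∈ unitary _)
    {g : Matrix ι ι α} (hg : g ∈ unitaryGroup ι α) (i j : ι) :
    ∑ k, (g i k • (T i ⊗ₖ T k)) * star (g j k • (T j ⊗ₖ T k)) = if i = j then 1 else 0 := by
  have hgg : ∑ k, g i k * star (g j k) = (1 : Matrix ι ι α) i j := by
    rw [← Unitary.mul_star_self_of_mem hg, mul_apply]; rfl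
  simp_rw [smul_kronecker_mul_star_smul_kronecker, Unitary.mul_star_self_of_mem (hT _),
    ← Finset.sum_smul, hgg, one_apply]
  split_ifs with hij
  · rw [hij, Unitary.mul_star_self_of_mem (hT j), one_kronecker_one, one_smul]
  · rw [zero_smul]

lemma sum_star_smul_kronecker_mul_eq_ite {T : ι → Matrix n n α} (hT : ∀ a, T a ∈ unitary _)
    {g : Matrix ι ι α} (hg : g ∈ unitaryGroup ι α) (i j : ι) :
    ∑ k, star (g k i • (T k ⊗ₖ T i)) * (g k j • (T k ⊗ₖ T j)) = if i = j then 1 else 0 := by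
  have hgg : ∑ k, star (g k i) * g k j = (1 : Matrix ι ι α) i j := by
    rw [← Unitary.star_mul_self_of_mem hg, mul_apply]; rfl
  simp_rw [star_smul_kronecker_mul_smul_kronecker, Unitary.star_mul_self_of_mem (hT _),
    ← Finset.sum_smul, hgg, one_apply]
  split_ifs with hij
  · rw [hij, Unitary.star_mul_self_of_mem (hT j), one_kronecker_one, one_smul]
  · rw [zero_smul]

end Kronecker

lemma mul_eq_ite_smul_mul_of_anticomm {α ι R : Type*} [CommRing α] [Ring R] [Module α R]
    [DecidableEq ι] {T : ι → R} (hT : Pairwise fun a b => T a * T b = -(T b * T a)) (a b : ι) :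
    T a * T b = (if a = b then (1 : α) else -1) • (T b * T a) := by
  split_ifs with hab
  · rw [hab, one_smul]
  · rw [hT hab, neg_one_smul]

def pauliUnit : Fin 3 → Matrix (Fin 2) (Fin 2) ℂ :=
  ![Complex.I • !![0, 1; 1, 0], Complex.I • !![0, -Complex.I; Complex.I, 0],
    Complex.I • !![1, 0; 0, -1]]

lemma pauliUnit_mem_unitary (a : Fin 3) : pauliUnit a ∈ unitary _ := by
  rw [Unitary.mem_iff]
  constructor <;> ext i j <;> fin_cases a <;> fin_cases i <;> fin_cases j <;>
    simp [pauliUnit, mul_apply, Fin.sum_univ_succ]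

lemma pauliUnit_anticomm :
    Pairwise fun a b => pauliUnit a * pauliUnit b = -(pauliUnit b * pauliUnit a) := by
  intro a b hab
  ext i j
  fin_cases a <;> fin_cases b <;> (try exact absurd rfl hab) <;>
    fin_cases i <;> fin_cases j <;> simp [pauliUnit, mul_apply, Fin.sum_univ_succ]

theorem stmt_5 (T : Fin 3 → Matrix (Fin 2) (Fin 2) ℂ)
    (h1 : T 0 = Complex.I • !![0, 1; 1, 0])
    (h2 : T 1 = Complex.I • !![0, -Complex.I; Complex.I, 0])
    (h3 : T 2 = Complex.I • !![1, 0; 0, -1])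
    (g : Matrix (Fin 3) (Fin 3) ℂ) (hg : g ∈ Matrix.unitaryGroup (Fin 3) ℂ)
    (U : Fin 3 → Fin 3 → Matrix (Fin 2 × Fin 2) (Fin 2 × Fin 2) ℂ)
    (hU : ∀ i j, U i j = g i j • (T i ⊗ₖ T j)) :
    (∀ i j, ∑ k, U i k * star (U j k) = if i = j then 1 else 0) ∧
    (∀ i j, ∑ k, star (U k i) * U k j = if i = j then 1 else 0) ∧
    (∀ i j k l, U i j * U k l =
      ((-1 : ℂ) ^ ((if i = k then 1 else 0) + (if j = l then 1 else 0) : ℕ)) •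
        (U k l * U i j)) := by
  obtain rfl : T = pauliUnit := by
    funext a
    fin_cases a <;> assumption
  have hT := pauliUnit_mem_unitary
  have hcomm := mul_eq_ite_smul_mul_of_anticomm (α := ℂ) pauliUnit_anticomm
  refine ⟨fun i j => ?_, fun i j => ?_, fun i j k l => ?_⟩
  · simpa only [hU] using sum_smul_kronecker_mul_star_eq_ite hT hg i j
  · simpa only [hU] using sum_star_smul_kronecker_mul_eq_ite hT hg i j
  · rw [hU, hU, smul_kronecker_mul_smul_kronecker_comm (hcomm i k) (hcomm j l)]
    congr 1
    split_ifs <;> norm_num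
end

section
/- Let g ∈ SU(3) and let Γ ⊂ SU(3) be the subgroup of diagonal matrices with ±1 entries and determinant 1. Then the set {(s,t) ∈ Γ × Γ : s g t = g} equals {(1,1)} if and only if g has a row with all entries nonzero or a column with all entries nonzero. -/
/-! Write `s = diag σ` and `t = diag τ`. Then `s g t = g` says exactly that `σ a τ b = 1` wherever
`g a b ≠ 0`. If row `i` of `g` has no zero, all `τ b` equal `σ i`, so `1 = det t = σ i ^ 3 = σ i`;
hence `t = 1`, and `s = 1` because `g` is invertible. Columns follow by transposing.
Conversely, if every row has a zero, orthogonality of the rows of the unitary `g` forces a row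
with two zeros, and then a "cross": a row `i` and a column `j` vanishing outside their common
entry. The signs `σ = (1 at i, -1 elsewhere)`, `τ = (1 at j, -1 elsewhere)` then fix `g`. -/

/-- The subgroup `Γ ⊂ SU(3)` of diagonal matrices with `±1` entries and determinant `1`,
as a set of matrices. -/
def GammaSet : Set (Matrix (Fin 3) (Fin 3) ℂ) :=
  {s | (∀ i j, i ≠ j → s i j = 0) ∧ (∀ i, s i i = 1 ∨ s i i = -1) ∧ s.det = 1}

open Matrix

namespace Matrix

variable {n R : Type*} [Fintype n] [DecidableEq n] [CommRing R] [NoZeroDivisors R]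

lemma diagonal_mul_mul_diagonal_eq_self_iff {σ τ : n → R} {g : Matrix n n R} :
    diagonal σ * g * diagonal τ = g ↔ ∀ a b, g a b ≠ 0 → σ a * τ b = 1 := by
  simp only [← Matrix.ext_iff, mul_diagonal, diagonal_mul]
  refine forall₂_congr fun a b => ⟨fun h hg => ?_, fun h => ?_⟩
  · exact mul_right_cancel₀ hg (by linear_combination h)
  · by_cases hg : g a b = 0
    · simp [hg]
    · linear_combination g a b * h hg

variable [StarRing R]

lemma eq_zero_or_eq_zero_of_mem_unitaryGroup {g : Matrix n n R} (hu : g ∈ unitaryGroup n R)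
    {i a : n} (hia : i ≠ a) (k : n) (h : ∀ b, b ≠ k → g i b = 0 ∨ g a b = 0) :
    g i k = 0 ∨ g a k = 0 := by
  have horth : ∑ b, g i b * star (g a b) = 0 := by
    simpa [mul_apply, one_apply_ne hia] using congrFun₂ (mem_unitaryGroup_iff.mp hu) i a
  rw [Finset.sum_eq_single k (fun b _ hb => by rcases h b hb with h | h <;> simp [h])
    (by simp)] at horth
  simpa using horth

end Matrix

lemma Fin.exists_ne_ne_of_ne_three :
    ∀ j₁ j₂ : Fin 3, j₁ ≠ j₂ → ∃ k, k ≠ j₁ ∧ k ≠ j₂ ∧ ∀ b, b ≠ k → b = j₁ ∨ b = j₂ := by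
  decide

section GammaSet

lemma one_mem_GammaSet : (1 : Matrix (Fin 3) (Fin 3) ℂ) ∈ GammaSet :=
  ⟨fun _ _ => one_apply_ne, fun _ => Or.inl (one_apply_eq _), det_one⟩

lemma eq_diagonal_of_mem_GammaSet {s : Matrix (Fin 3) (Fin 3) ℂ} (hs : s ∈ GammaSet) :
    s = diagonal fun i => s i i := by
  ext a b
  by_cases h : a = b
  · subst h; simp
  · rw [diagonal_apply_ne _ h, hs.1 a b h]

lemma transpose_eq_of_mem_GammaSet {s : Matrix (Fin 3) (Fin 3) ℂ} (hs : s ∈ GammaSet) :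
    sᵀ = s := by
  rw [eq_diagonal_of_mem_GammaSet hs, diagonal_transpose]

def signExcept (i : Fin 3) : Matrix (Fin 3) (Fin 3) ℂ :=
  diagonal fun a => if a = i then 1 else -1

lemma signExcept_mem_GammaSet (i : Fin 3) : signExcept i ∈ GammaSet := by
  refine ⟨fun a b hab => diagonal_apply_ne _ hab, fun a => ?_, ?_⟩
  · by_cases h : a = i <;> simp [signExcept, h]
  · rw [signExcept, det_diagonal, Fin.prod_univ_three]
    fin_cases i <;> simp

lemma signExcept_ne_one (i : Fin 3) : signExcept i ≠ 1 := by
  obtain ⟨a, ha⟩ : ∃ a, a ≠ i := by fin_cases i <;> decide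
  intro h
  have := congrFun₂ h a a
  norm_num [signExcept, ha] at this

end GammaSet

def gammaStabilizer (g : Matrix (Fin 3) (Fin 3) ℂ) :
    Set (Matrix (Fin 3) (Fin 3) ℂ × Matrix (Fin 3) (Fin 3) ℂ) :=
  {p | p.1 ∈ GammaSet ∧ p.2 ∈ GammaSet ∧ p.1 * g * p.2 = g}

section Stabilizer

variable {g : Matrix (Fin 3) (Fin 3) ℂ}

lemma one_mem_gammaStabilizer (g : Matrix (Fin 3) (Fin 3) ℂ) : (1, 1) ∈ gammaStabilizer g :=
  ⟨one_mem_GammaSet, one_mem_GammaSet, by simp⟩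

lemma mem_gammaStabilizer_transpose {s t : Matrix (Fin 3) (Fin 3) ℂ} :
    (s, t) ∈ gammaStabilizer gᵀ ↔ (t, s) ∈ gammaStabilizer g := by
  refine ⟨fun ⟨hs, ht, h⟩ => ⟨ht, hs, ?_⟩, fun ⟨ht, hs, h⟩ => ⟨hs, ht, ?_⟩⟩
  · simpa [Matrix.mul_assoc, transpose_eq_of_mem_GammaSet hs, transpose_eq_of_mem_GammaSet ht]
      using congrArg transpose h
  · simpa [Matrix.mul_assoc, transpose_eq_of_mem_GammaSet hs, transpose_eq_of_mem_GammaSet ht]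
      using congrArg transpose h

lemma eq_one_of_mem_gammaStabilizer_of_row_ne_zero (hg : IsUnit g.det) {i : Fin 3}
    (hi : ∀ j, g i j ≠ 0) {s t : Matrix (Fin 3) (Fin 3) ℂ} (h : (s, t) ∈ gammaStabilizer g) :
    s = 1 ∧ t = 1 := by
  obtain ⟨hs, ht, hst⟩ : s ∈ GammaSet ∧ t ∈ GammaSet ∧ s * g * t = g := h
  have hsign : ∀ b, t b b = s i i := by
    rw [eq_diagonal_of_mem_GammaSet hs, eq_diagonal_of_mem_GammaSet ht,
      diagonal_mul_mul_diagonal_eq_self_iff] at hst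
    intro b
    linear_combination s i i * hst i b (hi b) - t b b * mul_self_eq_one_iff.mpr (hs.2.1 i)
  have hsi : s i i = 1 := by
    have hdet := ht.2.2
    rw [eq_diagonal_of_mem_GammaSet ht, det_diagonal, Fin.prod_univ_three, hsign, hsign,
      hsign] at hdet
    linear_combination hdet - s i i * mul_self_eq_one_iff.mpr (hs.2.1 i)
  have ht1 : t = 1 := by
    rw [eq_diagonal_of_mem_GammaSet ht]
    simp only [hsign, hsi, diagonal_one]
  rw [ht1, Matrix.mul_one] at hst
  exact ⟨((isUnit_iff_isUnit_det g).mpr hg).mul_eq_right.mp hst, ht1⟩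

lemma eq_one_of_mem_gammaStabilizer_of_col_ne_zero (hg : IsUnit g.det) {j : Fin 3}
    (hj : ∀ i, g i j ≠ 0) {s t : Matrix (Fin 3) (Fin 3) ℂ} (h : (s, t) ∈ gammaStabilizer g) :
    s = 1 ∧ t = 1 :=
  (eq_one_of_mem_gammaStabilizer_of_row_ne_zero (g := gᵀ) (by rwa [det_transpose]) hj
    (mem_gammaStabilizer_transpose.mpr h)).symm

lemma signExcept_mem_gammaStabilizer {i j : Fin 3} (hrow : ∀ b, b ≠ j → g i b = 0)
    (hcol : ∀ a, a ≠ i → g a j = 0) : (signExcept i, signExcept j) ∈ gammaStabilizer g := by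
  refine ⟨signExcept_mem_GammaSet i, signExcept_mem_GammaSet j, ?_⟩
  rw [signExcept, signExcept, diagonal_mul_mul_diagonal_eq_self_iff]
  intro a b hab
  by_cases ha : a = i <;> by_cases hb : b = j
  · simp [ha, hb]
  · exact absurd (ha ▸ hrow b hb) hab
  · exact absurd (hb ▸ hcol a ha) hab
  · simp [ha, hb]

end Stabilizer

section ZeroPattern

variable {g : Matrix (Fin 3) (Fin 3) ℂ}

lemma exists_row_two_zeros_of_mem_unitaryGroup (hu : g ∈ unitaryGroup (Fin 3) ℂ)
    (hdet : g.det ≠ 0) (hrow : ∀ i, ∃ j, g i j = 0) :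
    ∃ i j₁ j₂, j₁ ≠ j₂ ∧ g i j₁ = 0 ∧ g i j₂ = 0 := by
  choose z hz using hrow
  by_cases hconst : ∀ i, z i = z 0
  · exact absurd (det_eq_zero_of_column_eq_zero (z 0) fun i => hconst i ▸ hz i) hdet
  push Not at hconst
  obtain ⟨i, hi⟩ := hconst
  obtain ⟨k, hki, hk0, hk⟩ := Fin.exists_ne_ne_of_ne_three _ _ hi
  have hi0 : i ≠ 0 := by rintro rfl; exact hi rfl
  have hzeros : ∀ b, b ≠ k → g i b = 0 ∨ g 0 b = 0 := fun b hb => by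
    rcases hk b hb with rfl | rfl
    exacts [Or.inl (hz i), Or.inr (hz 0)]
  rcases eq_zero_or_eq_zero_of_mem_unitaryGroup hu hi0 k hzeros with h | h
  exacts [⟨i, z i, k, hki.symm, hz i, h⟩, ⟨0, z 0, k, hk0.symm, hz 0, h⟩]

lemma exists_cross_zero_pattern (hu : g ∈ unitaryGroup (Fin 3) ℂ) (hdet : g.det ≠ 0)
    (hrow : ∀ i, ∃ j, g i j = 0) :
    ∃ i j, (∀ b, b ≠ j → g i b = 0) ∧ ∀ a, a ≠ i → g a j = 0 := by
  obtain ⟨i, j₁, j₂, hne, h₁, h₂⟩ := exists_row_two_zeros_of_mem_unitaryGroup hu hdet hrow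
  obtain ⟨k, -, -, hk⟩ := Fin.exists_ne_ne_of_ne_three j₁ j₂ hne
  have hrowk : ∀ b, b ≠ k → g i b = 0 := fun b hb => by rcases hk b hb with rfl | rfl <;> assumption
  have hik : g i k ≠ 0 := fun h0 =>
    hdet (det_eq_zero_of_row_eq_zero i fun b => if hb : b = k then hb ▸ h0 else hrowk b hb)
  refine ⟨i, k, hrowk, fun a ha => ?_⟩
  exact (eq_zero_or_eq_zero_of_mem_unitaryGroup hu (Ne.symm ha) k
    fun b hb => Or.inl (hrowk b hb)).resolve_left hik

end ZeroPattern

theorem stmt_6 (g : Matrix (Fin 3) (Fin 3) ℂ)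
    (hg : g ∈ Matrix.specialUnitaryGroup (Fin 3) ℂ) :
    {p : Matrix (Fin 3) (Fin 3) ℂ × Matrix (Fin 3) (Fin 3) ℂ |
        p.1 ∈ GammaSet ∧ p.2 ∈ GammaSet ∧ p.1 * g * p.2 = g} = {(1, 1)} ↔
      ((∃ i, ∀ j, g i j ≠ 0) ∨ (∃ j, ∀ i, g i j ≠ 0)) := by
  obtain ⟨hu, hdet⟩ := mem_specialUnitaryGroup_iff.mp hg
  have hunit : IsUnit g.det := hdet ▸ isUnit_one
  change gammaStabilizer g = {(1, 1)} ↔ _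
  rw [Set.eq_singleton_iff_unique_mem]
  refine ⟨fun ⟨_, htriv⟩ => ?_, fun hfull => ⟨one_mem_gammaStabilizer g, fun ⟨s, t⟩ hst => ?_⟩⟩
  · by_contra! hzero
    obtain ⟨i, j, hrow, hcol⟩ := exists_cross_zero_pattern hu hunit.ne_zero hzero.1
    have hfix := htriv _ (signExcept_mem_gammaStabilizer hrow hcol)
    exact signExcept_ne_one i (congrArg Prod.fst hfix)
  · obtain ⟨rfl, rfl⟩ := hfull.elim
      (fun ⟨i, hi⟩ => eq_one_of_mem_gammaStabilizer_of_row_ne_zero hunit hi hst)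
      (fun ⟨j, hj⟩ => eq_one_of_mem_gammaStabilizer_of_col_ne_zero hunit hj hst)
    rfl
end

section
/- Let g be a 3×3 complex unitary matrix such that every row of g contains a zero entry and every column of g contains a zero entry. Then either g is a monomial matrix (exactly one nonzero entry in each row and column), or there exist indices i, j such that row i of g is supported only at column j and column j of g is supported only at row i (i.e., gᵢₖ = 0 for k ≠ j and gₖⱼ = 0 for k ≠ i). -/
/-!
If two rows of a 3 × 3 unitary matrix have their zeros in the same column, that column is
supported on the third row alone. Otherwise the zeros of the rows sit in distinct columns, and
orthogonality of the first two rows collapses to a single product, at the column where both could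
be nonzero; so one of them has a second zero and is supported at a single entry. In a unitary
matrix an entry is alone in its row if and only if it is alone in its column, since that row
(column) is orthogonal to all others and has norm 1.
-/

namespace Matrix

section

variable {n α : Type*} [Fintype n] [CommRing α] [StarRing α] {g : Matrix n n α}

theorem sum_mul_star_of_forall_ne_eq_zero {i j : n} (hi : ∀ m, m ≠ j → g i m = 0) (k : n) :
    ∑ m, g i m * star (g k m) = g i j * star (g k j) :=
  Fintype.sum_eq_single j fun m hm => by rw [hi m hm, zero_mul]

variable [DecidableEq n]

theorem sum_mul_star_of_mem_unitaryGroup (hg : g ∈ unitaryGroup n α) (i k : n) :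
    ∑ m, g i m * star (g k m) = (1 : Matrix n n α) i k := by
  rw [← mem_unitaryGroup_iff.mp hg, mul_apply]
  simp only [star_apply]

variable [NoZeroDivisors α] [Nontrivial α]

theorem forall_ne_apply_eq_zero_of_forall_ne_apply_eq_zero (hg : g ∈ unitaryGroup n α)
    {i j : n} (hi : ∀ k, k ≠ j → g i k = 0) : ∀ k, k ≠ i → g k j = 0 := by
  intro k hk
  have hij : g i j ≠ 0 := by
    intro h0
    have := sum_mul_star_of_mem_unitaryGroup hg i i
    rw [sum_mul_star_of_forall_ne_eq_zero hi, h0, zero_mul, one_apply_eq] at this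
    exact zero_ne_one this
  have hik := sum_mul_star_of_mem_unitaryGroup hg i k
  rw [sum_mul_star_of_forall_ne_eq_zero hi, one_apply_ne hk.symm] at hik
  exact star_eq_zero.mp ((mul_eq_zero.mp hik).resolve_left hij)

theorem forall_ne_apply_eq_zero_iff_forall_ne_apply_eq_zero (hg : g ∈ unitaryGroup n α)
    (i j : n) : (∀ k, k ≠ j → g i k = 0) ↔ ∀ k, k ≠ i → g k j = 0 := by
  refine ⟨forall_ne_apply_eq_zero_of_forall_ne_apply_eq_zero hg, fun hj k hk => ?_⟩
  have hj' : ∀ k, k ≠ i → star g j k = 0 := fun k hk => by rw [star_apply, hj k hk, star_zero]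
  have := forall_ne_apply_eq_zero_of_forall_ne_apply_eq_zero (Unitary.star_mem hg) hj' k hk
  rwa [star_apply, star_eq_zero] at this

end

theorem exists_forall_ne_apply_eq_zero_of_fin_three {α : Type*} [CommRing α]
    [StarRing α] [NoZeroDivisors α] [Nontrivial α] {g : Matrix (Fin 3) (Fin 3) α}
    (hg : g ∈ unitaryGroup (Fin 3) α) (hrow : ∀ i, ∃ j, g i j = 0) :
    ∃ i j, ∀ k, k ≠ j → g i k = 0 := by
  choose σ hσ using hrow
  by_cases hinj : Function.Injective σ
  · have h01 : σ 0 ≠ σ 1 := hinj.ne (by decide)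
    have h02 : σ 0 ≠ σ 2 := hinj.ne (by decide)
    have h12 : σ 1 ≠ σ 2 := hinj.ne (by decide)
    have hterm : ∀ m, m ≠ σ 2 → g 0 m * star (g 1 m) = 0 := by
      intro m hm
      rcases (by omega : m = σ 0 ∨ m = σ 1) with rfl | rfl
      · rw [hσ 0, zero_mul]
      · rw [hσ 1, star_zero, mul_zero]
    have horth := sum_mul_star_of_mem_unitaryGroup hg 0 1
    rw [Fintype.sum_eq_single (σ 2) hterm, one_apply_ne (by decide)] at horth
    rcases mul_eq_zero.mp horth with h0 | h1
    · refine ⟨0, σ 1, fun k hk => ?_⟩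
      rcases (by omega : k = σ 0 ∨ k = σ 2) with rfl | rfl
      exacts [hσ 0, h0]
    · refine ⟨1, σ 0, fun k hk => ?_⟩
      rcases (by omega : k = σ 1 ∨ k = σ 2) with rfl | rfl
      exacts [hσ 1, star_eq_zero.mp h1]
  · obtain ⟨a, b, hσab, hab⟩ := Function.not_injective_iff.mp hinj
    obtain ⟨t, hta, htb⟩ : ∃ t : Fin 3, t ≠ a ∧ t ≠ b := ⟨3 - a - b, by omega, by omega⟩
    refine ⟨t, σ a, (forall_ne_apply_eq_zero_iff_forall_ne_apply_eq_zero hg t (σ a)).mpr ?_⟩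
    intro k hk
    rcases (by omega : k = a ∨ k = b) with rfl | rfl
    exacts [hσ k, hσab ▸ hσ k]

end Matrix

theorem stmt_8_general (g : Matrix (Fin 3) (Fin 3) ℂ) (hg : g ∈ Matrix.unitaryGroup (Fin 3) ℂ)
    (hrow : ∀ i, ∃ j, g i j = 0) :
    (∃ ν : Equiv.Perm (Fin 3), ∀ i j, g i j ≠ 0 ↔ i = ν j) ∨
    (∃ i j, (∀ k, k ≠ j → g i k = 0) ∧ (∀ k, k ≠ i → g k j = 0)) := by
  right
  obtain ⟨i, j, hi⟩ := Matrix.exists_forall_ne_apply_eq_zero_of_fin_three hg hrow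
  exact ⟨i, j, hi, Matrix.forall_ne_apply_eq_zero_of_forall_ne_apply_eq_zero hg hi⟩

theorem stmt_8 (g : Matrix (Fin 3) (Fin 3) ℂ) (hg : g ∈ Matrix.unitaryGroup (Fin 3) ℂ)
    (hrow : ∀ i, ∃ j, g i j = 0) (hcol : ∀ j, ∃ i, g i j = 0) :
    (∃ ν : Equiv.Perm (Fin 3), ∀ i j, g i j ≠ 0 ↔ i = ν j) ∨
    (∃ i j, (∀ k, k ≠ j → g i k = 0) ∧ (∀ k, k ≠ i → g k j = 0)) :=
  stmt_8_general g hg hrow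
end

section
/- Let g ∈ SU(3) with i ≠ j be such that gᵢₖ = 0 for k ≠ j, gₖⱼ = 0 for k ≠ i, and g is not a monomial matrix. Then for every s in the subgroup Γ of diagonal ±1 matrices of determinant 1, the matrix g·s·g has a row with no zero entries or a column with no zero entries. -/
/-! The hypotheses isolate the entry `g i j`, and the complementary 2×2 block of the unitary `g`
is itself unitary. A 2×2 unitary with a zero entry is monomial, so all four entries of that block
are nonzero. For the third index `m`, column `m` of `g s g` then has no zero entry:
`(g s g) i m = g i j s j g j m` and `(g s g) r m = g r m s m g m m` for `r ≠ i`. -/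

open Matrix

section UnitaryEntries

variable {𝕜 n : Type*} [RCLike 𝕜] [Fintype n]

lemma eq_zero_of_sum_norm_sq_eq_one {v : n → 𝕜} (hv : ∑ k, ‖v k‖ ^ 2 = 1) {b : n}
    (hb : ‖v b‖ = 1) {k : n} (hk : k ≠ b) : v k = 0 := by
  classical
  rw [← Finset.add_sum_erase _ _ (Finset.mem_univ b), hb, one_pow, add_eq_left,
    Finset.sum_eq_zero_iff_of_nonneg fun _ _ => by positivity] at hv
  simpa using hv k (by simp [hk])

lemma norm_eq_one_of_sum_norm_sq_eq_one {v : n → 𝕜} (hv : ∑ k, ‖v k‖ ^ 2 = 1) {b : n}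
    (hb : ∀ k ≠ b, v k = 0) : ‖v b‖ = 1 := by
  rw [Finset.sum_eq_single b (fun k _ hk => by simp [hb k hk]) (by simp)] at hv
  exact (pow_eq_one_iff_of_nonneg (norm_nonneg _) two_ne_zero).mp hv

variable [DecidableEq n] {U : Matrix n n 𝕜}

lemma sum_norm_sq_row_eq_one_of_mem_unitaryGroup (hU : U ∈ unitaryGroup n 𝕜) (a : n) :
    ∑ k, ‖U a k‖ ^ 2 = 1 := by
  have h := congrFun (congrFun (mem_unitaryGroup_iff.mp hU) a) a
  simp only [mul_apply, star_apply, RCLike.star_def, RCLike.mul_conj, one_apply_eq] at h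
  exact_mod_cast h

lemma sum_norm_sq_col_eq_one_of_mem_unitaryGroup (hU : U ∈ unitaryGroup n 𝕜) (b : n) :
    ∑ k, ‖U k b‖ ^ 2 = 1 :=
  sum_norm_sq_row_eq_one_of_mem_unitaryGroup (transpose_mem_unitaryGroup_iff.mpr hU) b

lemma exists_perm_of_forall_norm_eq_one [Finite n] (hU : U ∈ unitaryGroup n 𝕜) (ν : n → n)
    (hν : ∀ b, ‖U (ν b) b‖ = 1) : ∃ σ : Equiv.Perm n, ∀ a b, U a b ≠ 0 ↔ a = σ b := by
  have hinj : ν.Injective := by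
    intro b b' h
    by_contra hbb'
    have hzero := eq_zero_of_sum_norm_sq_eq_one
      (sum_norm_sq_row_eq_one_of_mem_unitaryGroup hU (ν b)) (hν b) (Ne.symm hbb')
    have hone := hν b'
    rw [← h, hzero, norm_zero] at hone
    exact zero_ne_one hone
  refine ⟨Equiv.ofBijective ν (Finite.injective_iff_bijective.mp hinj), fun a b => ?_⟩
  refine ⟨fun hab => ?_, fun h => ?_⟩
  · by_contra ha
    exact hab (eq_zero_of_sum_norm_sq_eq_one (sum_norm_sq_col_eq_one_of_mem_unitaryGroup hU b)
      (hν b) ha)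
  · rw [h, ← norm_ne_zero_iff, Equiv.ofBijective_apply, hν b]
    exact one_ne_zero

end UnitaryEntries

lemma Fin.exists_third {i j : Fin 3} (hij : i ≠ j) :
    ∃ m, m ≠ i ∧ m ≠ j ∧ ∀ k, k = i ∨ k = j ∨ k = m := by
  revert i j; decide

lemma ne_zero_of_not_monomial {𝕜 : Type*} [RCLike 𝕜] {g : Matrix (Fin 3) (Fin 3) 𝕜}
    (hg : g ∈ unitaryGroup (Fin 3) 𝕜) {i j : Fin 3}
    (hrow : ∀ k ≠ j, g i k = 0) (hcol : ∀ k ≠ i, g k j = 0)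
    (hmon : ¬ ∃ σ : Equiv.Perm (Fin 3), ∀ a b, g a b ≠ 0 ↔ a = σ b)
    {a b : Fin 3} (ha : a ≠ i) (hb : b ≠ j) : g a b ≠ 0 := by
  intro hab
  obtain ⟨a', ha'i, ha'a, hrows⟩ := Fin.exists_third ha.symm
  obtain ⟨b', hb'j, hb'b, hcols⟩ := Fin.exists_third hb.symm
  have hcol_b : ∀ k ≠ a', g k b = 0 := by
    intro k hk
    rcases hrows k with rfl | rfl | rfl
    exacts [hrow b hb, hab, absurd rfl hk]
  have ha'b' : g a' b' = 0 :=
    eq_zero_of_sum_norm_sq_eq_one (sum_norm_sq_row_eq_one_of_mem_unitaryGroup hg a')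
      (norm_eq_one_of_sum_norm_sq_eq_one (sum_norm_sq_col_eq_one_of_mem_unitaryGroup hg b) hcol_b)
      hb'b
  have hcol_b' : ∀ k ≠ a, g k b' = 0 := by
    intro k hk
    rcases hrows k with rfl | rfl | rfl
    exacts [hrow b' hb'j, absurd rfl hk, ha'b']
  have hsingle : ∀ c, ∃ r, ∀ k ≠ r, g k c = 0 := by
    intro c
    rcases hcols c with rfl | rfl | rfl
    exacts [⟨i, hcol⟩, ⟨a', hcol_b⟩, ⟨a, hcol_b'⟩]
  choose ν hν using hsingle
  exact hmon <| exists_perm_of_forall_norm_eq_one hg ν fun c =>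
    norm_eq_one_of_sum_norm_sq_eq_one (sum_norm_sq_col_eq_one_of_mem_unitaryGroup hg c) (hν c)

theorem stmt_10 (g : Matrix (Fin 3) (Fin 3) ℂ)
    (hg : g ∈ Matrix.specialUnitaryGroup (Fin 3) ℂ) (i j : Fin 3) (hij : i ≠ j)
    (hrow : ∀ k, k ≠ j → g i k = 0) (hcol : ∀ k, k ≠ i → g k j = 0)
    (hmon : ¬ ∃ ν : Equiv.Perm (Fin 3), ∀ a b, g a b ≠ 0 ↔ a = ν b)
    (s : Matrix (Fin 3) (Fin 3) ℂ)
    (hs : (∀ a b, a ≠ b → s a b = 0) ∧ (∀ a, s a a = 1 ∨ s a a = -1) ∧ s.det = 1) :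
    (∃ r, ∀ c, (g * s * g) r c ≠ 0) ∨ (∃ c, ∀ r, (g * s * g) r c ≠ 0) := by
  have hU := (mem_specialUnitaryGroup_iff.mp hg).1
  have hgij : g i j ≠ 0 := by
    rw [← norm_ne_zero_iff,
      norm_eq_one_of_sum_norm_sq_eq_one (sum_norm_sq_col_eq_one_of_mem_unitaryGroup hU j) hcol]
    exact one_ne_zero
  have hblock {a b : Fin 3} (ha : a ≠ i) (hb : b ≠ j) : g a b ≠ 0 :=
    ne_zero_of_not_monomial hU hrow hcol hmon ha hb
  have hs_ne (k : Fin 3) : s k k ≠ 0 := by rcases hs.2.1 k with h | h <;> simp [h]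
  obtain ⟨m, hmi, hmj, hcover⟩ := Fin.exists_third hij
  rw [← (show s.IsDiag from hs.1).diagonal_diag]
  refine .inr ⟨m, fun r => ?_⟩
  simp only [mul_apply (M := g * _), mul_diagonal, diag_apply]
  by_cases hr : r = i
  · subst hr
    rw [Finset.sum_eq_single j (fun k _ hk => by simp [hrow k hk]) (by simp)]
    exact mul_ne_zero (mul_ne_zero hgij (hs_ne j)) (hblock hij.symm hmj)
  · rw [Finset.sum_eq_single m ?_ (by simp)]
    · exact mul_ne_zero (mul_ne_zero (hblock hr hmj) (hs_ne m)) (hblock hmi hmj)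
    · intro k _ hk
      rcases hcover k with rfl | rfl | rfl
      exacts [by simp [hrow m hmj], by simp [hcol r hr], absurd rfl hk]
end

section
/- Let g, g' ∈ SU(3) and let i ≠ j be indices such that: gᵢₖ = 0 for k ≠ i, gₖᵢ = 0 for k ≠ i, and g is not monomial; g'ⱼₖ = 0 for k ≠ j, g'ₖⱼ = 0 for k ≠ j, and g' is not monomial. Then for every s in the subgroup Γ of diagonal ±1 matrices of determinant 1, the matrix g·s·g' has a row with no zero entries or a column with no zero entries. -/
/-!
Let a unitary matrix vanish on row and column `i` off the diagonal. Through the unit norms of its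
rows and columns, a single zero entry outside row and column `i` forces every column to have
exactly one nonzero entry, i.e. the matrix is monomial. So `g` has no zeros outside row and column `i`, and `g'` none outside row and column
`j`. Expanding row `j` of `g * s * g'` over the diagonal of `s`, each entry is then a single
product of nonzero factors.
-/

open Matrix

namespace Matrix

section Unitary

variable {n 𝕜 : Type*} [Fintype n] [DecidableEq n] [RCLike 𝕜] {U : Matrix n n 𝕜}

theorem sum_norm_sq_row_of_mem_unitaryGroup (hU : U ∈ unitaryGroup n 𝕜) (a : n) :
    ∑ b, ‖U a b‖ ^ 2 = 1 := by
  have h : (U * star U) a a = (1 : Matrix n n 𝕜) a a := by rw [mem_unitaryGroup_iff.mp hU]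
  simp only [mul_apply, star_apply, one_apply_eq, RCLike.star_def, RCLike.mul_conj] at h
  exact_mod_cast h

theorem sum_norm_sq_col_of_mem_unitaryGroup (hU : U ∈ unitaryGroup n 𝕜) (b : n) :
    ∑ a, ‖U a b‖ ^ 2 = 1 := by
  have h : (star U * U) b b = (1 : Matrix n n 𝕜) b b := by rw [mem_unitaryGroup_iff'.mp hU]
  simp only [mul_apply, star_apply, one_apply_eq, RCLike.star_def, RCLike.conj_mul] at h
  exact_mod_cast h

theorem norm_sq_eq_one_of_col_eq_zero (hU : U ∈ unitaryGroup n 𝕜) {a b : n}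
    (h : ∀ a' ≠ a, U a' b = 0) : ‖U a b‖ ^ 2 = 1 := by
  rw [← sum_norm_sq_col_of_mem_unitaryGroup hU b,
    Fintype.sum_eq_single a fun a' ha' => by simp [h a' ha']]

theorem apply_ne_zero_of_col_eq_zero (hU : U ∈ unitaryGroup n 𝕜) {a b : n}
    (h : ∀ a' ≠ a, U a' b = 0) : U a b ≠ 0 := by
  intro h0
  simpa [h0] using norm_sq_eq_one_of_col_eq_zero hU h

theorem row_eq_zero_of_col_eq_zero (hU : U ∈ unitaryGroup n 𝕜) {a b : n}
    (h : ∀ a' ≠ a, U a' b = 0) : ∀ b' ≠ b, U a b' = 0 := by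
  have hrest : ∑ b' ∈ Finset.univ.erase b, ‖U a b'‖ ^ 2 = 0 := by
    have hsplit := Finset.add_sum_erase Finset.univ (fun b' => ‖U a b'‖ ^ 2) (Finset.mem_univ b)
    rw [sum_norm_sq_row_of_mem_unitaryGroup hU, norm_sq_eq_one_of_col_eq_zero hU h] at hsplit
    linarith
  intro b' hb'
  have := (Finset.sum_eq_zero_iff_of_nonneg fun _ _ => by positivity).mp hrest b'
    (Finset.mem_erase.mpr ⟨hb', Finset.mem_univ b'⟩)
  simpa using this

theorem exists_perm_of_col_eq_zero (hU : U ∈ unitaryGroup n 𝕜)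
    (h : ∀ b, ∃ a, ∀ a' ≠ a, U a' b = 0) :
    ∃ ν : Equiv.Perm n, ∀ a b, U a b ≠ 0 ↔ a = ν b := by
  choose f hf using h
  have hinj : f.Injective := by
    intro b b' hbb'
    by_contra hne
    have h0 := row_eq_zero_of_col_eq_zero hU (hf b) b' (Ne.symm hne)
    rw [hbb'] at h0
    exact apply_ne_zero_of_col_eq_zero hU (hf b') h0
  refine ⟨Equiv.ofBijective f (Finite.injective_iff_bijective.mp hinj), fun a b => ?_⟩
  refine ⟨fun hab => by_contra fun ha => hab (hf b a ha), ?_⟩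
  rintro rfl
  exact apply_ne_zero_of_col_eq_zero hU (hf b)

end Unitary

theorem mul_diagonal_mul_apply {n α : Type*} [Fintype n] [DecidableEq n] [CommSemiring α]
    (A B : Matrix n n α) (d : n → α) (r c : n) :
    (A * diagonal d * B) r c = ∑ k, A r k * d k * B k c := by
  rw [mul_apply]
  simp only [mul_diagonal]

end Matrix

/-- For distinct `x y : Fin 3`, the remaining element (the three elements sum to `0` in `ℤ/3`). -/
def Fin.third (x y : Fin 3) : Fin 3 := -(x + y)

theorem Fin.third_ne_left {x y : Fin 3} : x ≠ y → Fin.third x y ≠ x := by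
  revert x y; decide

theorem Fin.third_ne_right {x y : Fin 3} : x ≠ y → Fin.third x y ≠ y := by
  revert x y; decide

theorem Fin.eq_or_eq_or_eq_third {x y : Fin 3} (z : Fin 3) :
    x ≠ y → z = x ∨ z = y ∨ z = Fin.third x y := by
  revert x y z; decide

theorem apply_ne_zero_of_not_monomial {𝕜 : Type*} [RCLike 𝕜] {g : Matrix (Fin 3) (Fin 3) 𝕜}
    (hU : g ∈ unitaryGroup (Fin 3) 𝕜) {i : Fin 3}
    (hrow : ∀ k ≠ i, g i k = 0) (hcol : ∀ k ≠ i, g k i = 0)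
    (hmon : ¬ ∃ ν : Equiv.Perm (Fin 3), ∀ a b, g a b ≠ 0 ↔ a = ν b)
    {a b : Fin 3} (ha : a ≠ i) (hb : b ≠ i) : g a b ≠ 0 := by
  intro hab
  apply hmon
  have hcol_b : ∀ x ≠ Fin.third i a, g x b = 0 := by
    intro x hx
    rcases Fin.eq_or_eq_or_eq_third x ha.symm with rfl | rfl | rfl
    · exact hrow b hb
    · exact hab
    · exact absurd rfl hx
  have hrow_third := row_eq_zero_of_col_eq_zero hU hcol_b
  have hcol_third : ∀ x ≠ a, g x (Fin.third i b) = 0 := by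
    intro x hx
    rcases Fin.eq_or_eq_or_eq_third x ha.symm with rfl | rfl | rfl
    · exact hrow _ (Fin.third_ne_left hb.symm)
    · exact absurd rfl hx
    · exact hrow_third _ (Fin.third_ne_right hb.symm)
  refine exists_perm_of_col_eq_zero hU fun c => ?_
  rcases Fin.eq_or_eq_or_eq_third c hb.symm with rfl | rfl | rfl
  · exact ⟨c, hcol⟩
  · exact ⟨_, hcol_b⟩
  · exact ⟨a, hcol_third⟩

theorem stmt_11 (g g' : Matrix (Fin 3) (Fin 3) ℂ)
    (hg : g ∈ Matrix.specialUnitaryGroup (Fin 3) ℂ)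
    (hg' : g' ∈ Matrix.specialUnitaryGroup (Fin 3) ℂ)
    (i j : Fin 3) (hij : i ≠ j)
    (hrow : ∀ k, k ≠ i → g i k = 0) (hcol : ∀ k, k ≠ i → g k i = 0)
    (hmon : ¬ ∃ ν : Equiv.Perm (Fin 3), ∀ a b, g a b ≠ 0 ↔ a = ν b)
    (hrow' : ∀ k, k ≠ j → g' j k = 0) (hcol' : ∀ k, k ≠ j → g' k j = 0)
    (hmon' : ¬ ∃ ν : Equiv.Perm (Fin 3), ∀ a b, g' a b ≠ 0 ↔ a = ν b)
    (s : Matrix (Fin 3) (Fin 3) ℂ)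
    (hs : (∀ a b, a ≠ b → s a b = 0) ∧ (∀ a, s a a = 1 ∨ s a a = -1) ∧ s.det = 1) :
    (∃ r, ∀ c, (g * s * g') r c ≠ 0) ∨ (∃ c, ∀ r, (g * s * g') r c ≠ 0) := by
  have hU := (mem_specialUnitaryGroup_iff.mp hg).1
  have hU' := (mem_specialUnitaryGroup_iff.mp hg').1
  obtain ⟨hdiag, hsign, -⟩ := hs
  have hs_ne : ∀ k, s k k ≠ 0 := fun k => by rcases hsign k with h | h <;> simp [h]
  have hg_ne : ∀ {a b}, a ≠ i → b ≠ i → g a b ≠ 0 :=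
    apply_ne_zero_of_not_monomial hU hrow hcol hmon
  have hg'_ne : ∀ {a b}, a ≠ j → b ≠ j → g' a b ≠ 0 :=
    apply_ne_zero_of_not_monomial hU' hrow' hcol' hmon'
  -- Row `j` of `g * s * g'` has a single nonzero term in its expansion:
  -- `k = j` in column `j`, and `k = Fin.third i j` in the other columns.
  refine Or.inl ⟨j, fun c => ?_⟩
  rw [← IsDiag.diagonal_diag hdiag, mul_diagonal_mul_apply]
  by_cases hc : c = j
  · subst hc
    rw [Fintype.sum_eq_single c fun k hk => by simp [hcol' k hk]]
    exact mul_ne_zero (mul_ne_zero (hg_ne hij.symm hij.symm) (hs_ne c))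
      (apply_ne_zero_of_col_eq_zero hU' hcol')
  · rw [Fintype.sum_eq_single (Fin.third i j) fun k hk => ?_]
    · exact mul_ne_zero (mul_ne_zero (hg_ne hij.symm (Fin.third_ne_left hij)) (hs_ne _))
        (hg'_ne (Fin.third_ne_right hij) hc)
    · rcases Fin.eq_or_eq_or_eq_third k hij with rfl | rfl | h
      · simp [hcol j hij.symm]
      · simp [hrow' c hc]
      · exact absurd h hk
end

section
/- For each m ≥ 1, there exists a bicharacter σ : A × A → {±1}, where A is the quotient of (ℤ/2ℤ)^{2m+1} (with generators t₁,…,t_{2m+1}) by the relation t₁t₂⋯t_{2m+1} = 1, such that σ(tᵢ,tⱼ) = -1 and σ(tⱼ,tᵢ) = 1 for 1 ≤ i < j ≤ 2m, σ(tᵢ,tᵢ) = (-1)^m for 1 ≤ i ≤ 2m+1, and σ(tᵢ,t_{2m+1}) = (-1)^{m-i} = -σ(t_{2m+1},tᵢ) for 1 ≤ i ≤ 2m. -/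
/-!
The map `x ↦ (xᵢ - x_{2m+1})_{i ≤ 2m}` kills `t₁ ⋯ t_{2m+1}`, so it descends to a homomorphism
`A → (ℤ/2)^{2m}` sending `tᵢ ↦ eᵢ` for `i ≤ 2m` and `t_{2m+1} ↦ (1, …, 1)`. Pull back the
bilinear form with Gram matrix `m · I + (strictly upper triangular ones)` and exponentiate `-1`.
The values involving `t_{2m+1}` are then row sums, column sums and the total sum of this matrix,
whose parities are `m + i + 1`, `m + i` and `m`.
-/

/-- The subgroup generated by `t₁ t₂ ⋯ t_{2m+1}` in `(ℤ/2)^{2m+1}` (written additively). -/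
def relSubgroup (m : ℕ) : AddSubgroup (Fin (2 * m + 1) → ZMod 2) :=
  AddSubgroup.closure {fun _ => 1}

/-- The quotient group `A` of `(ℤ/2)^{2m+1}` by the relation `t₁ t₂ ⋯ t_{2m+1} = 1`. -/
def Am (m : ℕ) : Type := (Fin (2 * m + 1) → ZMod 2) ⧸ relSubgroup m

instance (m : ℕ) : AddCommGroup (Am m) :=
  inferInstanceAs (AddCommGroup ((Fin (2 * m + 1) → ZMod 2) ⧸ relSubgroup m))

/-- The image of the `i`-th generator `tᵢ` in `A`. -/
def tgen (m : ℕ) (i : Fin (2 * m + 1)) : Am m :=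
  QuotientAddGroup.mk (Pi.single i 1)

open Finset Matrix

section SubLastCoord

variable (n : ℕ) (R : Type*) [AddCommGroup R]

def subLastCoord : (Fin (n + 1) → R) →+ (Fin n → R) where
  toFun x k := x k.castSucc - x (Fin.last n)
  map_zero' := by ext; simp
  map_add' x y := by ext; simp only [Pi.add_apply]; abel

variable {n R}

lemma subLastCoord_const (a : R) : subLastCoord n R (fun _ => a) = 0 := by
  ext; simp [subLastCoord]

lemma subLastCoord_single_castSucc (k : Fin n) (a : R) :
    subLastCoord n R (Pi.single k.castSucc a) = Pi.single k a := by
  ext l; simp [subLastCoord, Pi.single_apply, (Fin.castSucc_lt_last _).ne]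

lemma subLastCoord_single_last (a : R) :
    subLastCoord n R (Pi.single (Fin.last n) a) = fun _ => -a := by
  ext l; simp [subLastCoord, (Fin.castSucc_lt_last _).ne]

end SubLastCoord

section StrictUpperOnes

variable (n : ℕ) (R : Type*) [NonAssocSemiring R]

def strictUpperOnes : Matrix (Fin n) (Fin n) R := of fun i j => if i < j then 1 else 0

variable {n R}

lemma strictUpperOnes_mulVec_one (i : Fin n) :
    (strictUpperOnes n R *ᵥ 1) i = ((n - 1 - i : ℕ) : R) := by
  simp [strictUpperOnes, mulVec, dotProduct_one, sum_boole, filter_lt_eq_Ioi]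

lemma one_vecMul_strictUpperOnes (j : Fin n) : (1 ᵥ* strictUpperOnes n R) j = ((j : ℕ) : R) := by
  simp [strictUpperOnes, vecMul, one_dotProduct, sum_boole, filter_gt_eq_Iio]

end StrictUpperOnes

section ExponentMatrix

def exponentMatrix (n : ℕ) (c : ZMod 2) : Matrix (Fin n) (Fin n) (ZMod 2) :=
  c • 1 + strictUpperOnes n (ZMod 2)

variable {n : ℕ} (c : ZMod 2)

lemma exponentMatrix_apply_of_lt {i j : Fin n} (h : i < j) : exponentMatrix n c i j = 1 := by
  simp [exponentMatrix, strictUpperOnes, h, h.ne]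

lemma exponentMatrix_apply_of_gt {i j : Fin n} (h : j < i) : exponentMatrix n c i j = 0 := by
  simp [exponentMatrix, strictUpperOnes, h.not_gt, h.ne']

lemma exponentMatrix_apply_self (i : Fin n) : exponentMatrix n c i i = c := by
  simp [exponentMatrix, strictUpperOnes]

lemma exponentMatrix_mulVec_one (i : Fin n) :
    (exponentMatrix n c *ᵥ 1) i = c + (n - 1 - i : ℕ) := by
  simp [exponentMatrix, add_mulVec, smul_mulVec, strictUpperOnes_mulVec_one]

lemma one_vecMul_exponentMatrix (j : Fin n) : (1 ᵥ* exponentMatrix n c) j = c + (j : ℕ) := by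
  simp [exponentMatrix, vecMul_add, vecMul_smul, one_vecMul_strictUpperOnes]

end ExponentMatrix

lemma ZMod.natCast_two_mul_sub_one_sub {m i : ℕ} (h : i < 2 * m) :
    ((2 * m - 1 - i : ℕ) : ZMod 2) = i + 1 := by
  rw [← Nat.cast_succ, ZMod.natCast_eq_natCast_iff']
  omega

lemma ZMod.sum_range_two_mul_natCast (m : ℕ) : ∑ j ∈ range (2 * m), (j : ZMod 2) = m := by
  induction m with
  | zero => simp
  | succ m ih =>
    rw [show 2 * (m + 1) = 2 * m + 1 + 1 by ring, sum_range_succ, sum_range_succ, ih]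
    push_cast
    ring_nf
    reduce_mod_char

section SignPairing

variable {A ι : Type*} [AddCommGroup A] [Fintype ι]

def signPairing (φ : A →+ (ι → ZMod 2)) (M : Matrix ι ι (ZMod 2)) (a b : A) : ℤˣ :=
  (-1) ^ (φ a ⬝ᵥ M *ᵥ φ b)

variable (φ : A →+ (ι → ZMod 2)) (M : Matrix ι ι (ZMod 2))

lemma signPairing_add_left (a a' b : A) :
    signPairing φ M (a + a') b = signPairing φ M a b * signPairing φ M a' b := by
  simp only [signPairing, map_add, add_dotProduct, uzpow_add]

lemma signPairing_add_right (a b b' : A) :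
    signPairing φ M a (b + b') = signPairing φ M a b * signPairing φ M a b' := by
  simp only [signPairing, map_add, mulVec_add, dotProduct_add, uzpow_add]

end SignPairing

namespace Am

def proj (m : ℕ) : Am m →+ (Fin (2 * m) → ZMod 2) :=
  QuotientAddGroup.lift (relSubgroup m) (subLastCoord (2 * m) (ZMod 2)) <|
    (AddSubgroup.closure_le _).2 <| Set.singleton_subset_iff.2 <| subLastCoord_const 1

abbrev sigma (m : ℕ) : Am m → Am m → ℤˣ := signPairing (proj m) (exponentMatrix (2 * m) m)

variable {m : ℕ}

lemma proj_tgen_castSucc (k : Fin (2 * m)) : proj m (tgen m k.castSucc) = Pi.single k 1 :=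
  subLastCoord_single_castSucc k 1

lemma proj_tgen_last : proj m (tgen m (Fin.last (2 * m))) = 1 :=
  (subLastCoord_single_last (1 : ZMod 2)).trans <| funext fun _ => ZMod.neg_eq_self_mod_two 1

lemma sigma_tgen_castSucc (i j : Fin (2 * m)) :
    sigma m (tgen m i.castSucc) (tgen m j.castSucc) = (-1) ^ exponentMatrix (2 * m) m i j := by
  simp [signPairing, proj_tgen_castSucc]

lemma sigma_tgen_castSucc_last (i : Fin (2 * m)) :
    sigma m (tgen m i.castSucc) (tgen m (Fin.last _)) = (-1) ^ (m + i + 1) := by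
  rw [sigma, signPairing, proj_tgen_castSucc, proj_tgen_last, single_one_dotProduct,
    exponentMatrix_mulVec_one, ZMod.natCast_two_mul_sub_one_sub i.isLt, ← add_assoc,
    ← uzpow_natCast (R := ZMod 2)]
  push_cast
  rfl

lemma sigma_tgen_last_castSucc (j : Fin (2 * m)) :
    sigma m (tgen m (Fin.last _)) (tgen m j.castSucc) = (-1) ^ (m + j) := by
  rw [sigma, signPairing, proj_tgen_castSucc, proj_tgen_last, dotProduct_mulVec,
    dotProduct_single_one, one_vecMul_exponentMatrix, ← uzpow_natCast (R := ZMod 2)]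
  push_cast
  rfl

lemma sigma_tgen_last_last : sigma m (tgen m (Fin.last _)) (tgen m (Fin.last _)) = (-1) ^ m := by
  rw [sigma, signPairing, proj_tgen_last, dotProduct_mulVec, dotProduct_one,
    ← uzpow_natCast (R := ZMod 2)]
  congr 1
  simp only [one_vecMul_exponentMatrix, sum_add_distrib, sum_const, card_univ, Fintype.card_fin,
    nsmul_eq_mul]
  rw [Fin.sum_univ_eq_sum_range (fun j => (j : ZMod 2)), ZMod.sum_range_two_mul_natCast]
  push_cast
  ring_nf
  reduce_mod_char

end Am

theorem stmt_16_general (m : ℕ) :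
    ∃ σ : Am m → Am m → ℤˣ,
      (∀ x y z, σ (x + y) z = σ x z * σ y z) ∧
      (∀ x y z, σ x (y + z) = σ x y * σ x z) ∧
      (∀ i j : Fin (2 * m + 1), i < j → (j : ℕ) < 2 * m →
        σ (tgen m i) (tgen m j) = -1 ∧ σ (tgen m j) (tgen m i) = 1) ∧
      (∀ i, σ (tgen m i) (tgen m i) = (-1) ^ m) ∧
      (∀ i : Fin (2 * m + 1), (i : ℕ) < 2 * m →
        σ (tgen m i) (tgen m (Fin.last (2 * m))) = (-1) ^ (m + (i : ℕ) + 1) ∧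
        σ (tgen m (Fin.last (2 * m))) (tgen m i) = -(-1) ^ (m + (i : ℕ) + 1)) := by
  refine ⟨Am.sigma m, signPairing_add_left _ _, signPairing_add_right _ _, ?_, ?_, ?_⟩
  · intro i j hij hj
    obtain ⟨i, rfl⟩ : ∃ k : Fin (2 * m), k.castSucc = i :=
      ⟨_, Fin.castSucc_castLT i (lt_trans hij hj)⟩
    obtain ⟨j, rfl⟩ : ∃ k : Fin (2 * m), k.castSucc = j := ⟨_, Fin.castSucc_castLT j hj⟩
    rw [Fin.castSucc_lt_castSucc_iff] at hij
    rw [Am.sigma_tgen_castSucc, Am.sigma_tgen_castSucc, exponentMatrix_apply_of_lt _ hij,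
      exponentMatrix_apply_of_gt _ hij, uzpow_one, uzpow_zero]
    exact ⟨rfl, rfl⟩
  · intro i
    induction i using Fin.lastCases with
    | last => exact Am.sigma_tgen_last_last
    | cast i => rw [Am.sigma_tgen_castSucc, exponentMatrix_apply_self, uzpow_natCast]
  · intro i hi
    obtain ⟨i, rfl⟩ : ∃ k : Fin (2 * m), k.castSucc = i := ⟨_, Fin.castSucc_castLT i hi⟩
    rw [Fin.val_castSucc, Am.sigma_tgen_castSucc_last, Am.sigma_tgen_last_castSucc, pow_succ,
      mul_neg_one, neg_neg]
    exact ⟨rfl, rfl⟩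

theorem stmt_16 (m : ℕ) (hm : 1 ≤ m) :
    ∃ σ : Am m → Am m → ℤˣ,
      (∀ x y z, σ (x + y) z = σ x z * σ y z) ∧
      (∀ x y z, σ x (y + z) = σ x y * σ x z) ∧
      (∀ i j : Fin (2 * m + 1), i < j → (j : ℕ) < 2 * m →
        σ (tgen m i) (tgen m j) = -1 ∧ σ (tgen m j) (tgen m i) = 1) ∧
      (∀ i, σ (tgen m i) (tgen m i) = (-1) ^ m) ∧
      (∀ i : Fin (2 * m + 1), (i : ℕ) < 2 * m →
        σ (tgen m i) (tgen m (Fin.last (2 * m))) = (-1) ^ (m + (i : ℕ) + 1) ∧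
        σ (tgen m (Fin.last (2 * m))) (tgen m i) = -(-1) ^ (m + (i : ℕ) + 1)) :=
  stmt_16_general m
end

section
/- Let A be an associative unital ℂ-algebra containing elements uᵢⱼ (1 ≤ i,j ≤ n) satisfying uᵢⱼuₖₗ = (-1)^{δᵢₖ+δⱼₗ} uₖₗuᵢⱼ for all i,j,k,l. Then Σ_{σ ∈ Sₙ} u_{1σ(1)} u_{2σ(2)} ⋯ u_{nσ(n)} = Σ_{σ ∈ Sₙ} u_{σ(1)1} u_{σ(2)2} ⋯ u_{σ(n)n}. -/
/-
Two entries in different rows and different columns commute, since the sign in the relation is then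
`(-1)^0 = 1`. The factors of `u₁σ(1) ⋯ uₙσ(n)` lie in pairwise distinct rows and columns, so they
may be reordered by columns, which turns the product into `uσ⁻¹(1)1 ⋯ uσ⁻¹(n)n`; summing over
`σ` and reindexing by `σ ↦ σ⁻¹` gives the claim.
-/

theorem Equiv.Perm.prod_map_finRange_comp {M : Type*} [Monoid M] {n : ℕ} (f : Fin n → M)
    (hf : Pairwise fun i j => Commute (f i) (f j)) (σ : Equiv.Perm (Fin n)) :
    ((List.finRange n).map (f ∘ σ)).prod = ((List.finRange n).map f).prod := by
  rw [← List.map_map]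
  exact ((σ.map_finRange_perm.map f).symm.prod_eq'
    (List.pairwise_map.mpr ((List.nodup_finRange n).imp fun h => hf h))).symm

theorem commute_of_ne_of_ne_of_sign_commute {A ι κ : Type*} [Ring A] [DecidableEq ι]
    [DecidableEq κ] {u : ι → κ → A}
    (hrel : ∀ i j k l, u i j * u k l =
      ((-1 : ℤ) ^ ((if i = k then 1 else 0) + (if j = l then 1 else 0) : ℕ)) • (u k l * u i j))
    {i k : ι} {j l : κ} (hik : i ≠ k) (hjl : j ≠ l) : Commute (u i j) (u k l) := by
  show u i j * u k l = u k l * u i j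
  simpa [hik, hjl] using hrel i j k l

theorem stmt_18_general (A : Type*) [Ring A] (n : ℕ)
    (u : Fin n → Fin n → A)
    (hrel : ∀ i j k l, u i j * u k l =
      ((-1 : ℤ) ^ ((if i = k then 1 else 0) + (if j = l then 1 else 0) : ℕ)) •
        (u k l * u i j)) :
    ∑ σ : Equiv.Perm (Fin n), ((List.finRange n).map (fun i => u i (σ i))).prod =
      ∑ σ : Equiv.Perm (Fin n), ((List.finRange n).map (fun i => u (σ i) i)).prod := by
  have reorder_by_columns (σ : Equiv.Perm (Fin n)) :
      ((List.finRange n).map fun i => u i (σ i)).prod =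
        ((List.finRange n).map fun i => u (σ⁻¹ i) i).prod := by
    have hcomm : Pairwise fun a b => Commute (u a (σ a)) (u b (σ b)) := fun a b hab =>
      commute_of_ne_of_ne_of_sign_commute hrel hab (σ.injective.ne hab)
    rw [← σ⁻¹.prod_map_finRange_comp _ hcomm]
    simp [Function.comp_def]
  simp only [reorder_by_columns]
  exact Fintype.sum_equiv (Equiv.inv _) _ _ fun _ => rfl

theorem stmt_18 (A : Type*) [Ring A] [Algebra ℂ A] (n : ℕ)
    (u : Fin n → Fin n → A)
    (hrel : ∀ i j k l, u i j * u k l =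
      ((-1 : ℤ) ^ ((if i = k then 1 else 0) + (if j = l then 1 else 0) : ℕ)) •
        (u k l * u i j)) :
    ∑ σ : Equiv.Perm (Fin n), ((List.finRange n).map (fun i => u i (σ i))).prod =
      ∑ σ : Equiv.Perm (Fin n), ((List.finRange n).map (fun i => u (σ i) i)).prod :=
  stmt_18_general A n u hrel
end

section
/- Let A be a unital *-algebra containing elements uᵢⱼ (1 ≤ i,j ≤ n) such that the matrix u = (uᵢⱼ) is unitary (u u* = I = u* u in Mₙ(A)) and uᵢⱼuₖₗ = (-1)^{δᵢₖ+δⱼₗ} uₖₗuᵢⱼ for all i,j,k,l. Then uᵢⱼ* uₖₗ = (-1)^{δᵢₖ+δⱼₗ} uₖₗ uᵢⱼ* for all i,j,k,l. -/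
/-! Treat `u*` as any matrix `v` subject to the two unitarity relations, and the sign
`(-1)^(δᵢₖ+δⱼₗ)` as `ε i k * η j l` with `ε`, `η` squaring to 1. Sum
`ε m k • v m j * u k l * u m j' * v i j'` over `m` and `j'`. Summing over `j'` first, the row
relation `∑ u m j' * v i j' = δ m i` leaves `ε i k • v i j * u k l`. Summing over `m` first, the
commutation relation moves `u k l` past `u m j'` at the cost of `ε m k * η j' l`, after which the
column relation `∑ v m j * u m j' = δ j j'` leaves `η j l • u k l * v i j`. Cancelling `ε i k`
gives the claim. -/

section TwistedUnitary

open Finset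

variable {ι A : Type*} [Fintype ι] [DecidableEq ι] [Ring A]
  {u v : ι → ι → A} {ε η : ι → ι → ℤ}

theorem sum_sum_smul_mul_eq_row_side
    (h₁ : ∀ i j, ∑ k, u i k * v j k = if i = j then 1 else 0) (i j k l : ι) :
    ∑ m, ∑ j', ε m k • (v m j * u k l * (u m j' * v i j')) = ε i k • (v i j * u k l) := by
  simp_rw [← smul_sum, ← mul_sum, h₁, mul_ite, mul_one, mul_zero, smul_ite, smul_zero,
    sum_ite_eq', mem_univ, if_true]

theorem sum_sum_smul_mul_eq_column_side (hη : ∀ a b, η a b * η a b = 1)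
    (h₂ : ∀ i j, ∑ k, v k i * u k j = if i = j then 1 else 0)
    (hrel : ∀ i j k l, u i j * u k l = (ε i k * η j l) • (u k l * u i j)) (i j k l : ι) :
    ∑ m, ∑ j', ε m k • (v m j * u k l * (u m j' * v i j')) = η j l • (u k l * v i j) := by
  have hmove : ∀ m j', ε m k • (v m j * u k l * u m j') = η j' l • (v m j * u m j' * u k l) := by
    intro m j'
    rw [mul_assoc _ (u m j'), hrel m j' k l, mul_smul_comm, smul_smul, ← mul_assoc (v m j)]
    congr 1
    linear_combination (-ε m k) * hη j' l
  calc ∑ m, ∑ j', ε m k • (v m j * u k l * (u m j' * v i j'))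
      = ∑ j', (η j' l • ((∑ m, v m j * u m j') * u k l)) * v i j' := by
        rw [sum_comm]
        refine sum_congr rfl fun j' _ => ?_
        simp_rw [sum_mul, smul_sum, sum_mul, ← hmove, smul_mul_assoc, mul_assoc]
    _ = η j l • (u k l * v i j) := by
        simp_rw [h₂, ite_mul, one_mul, zero_mul, smul_ite, smul_zero, ite_mul, zero_mul,
          sum_ite_eq, mem_univ, if_true, smul_mul_assoc]

theorem mul_eq_smul_mul_of_twisted_unitary (hε : ∀ a b, ε a b * ε a b = 1)
    (hη : ∀ a b, η a b * η a b = 1)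
    (h₁ : ∀ i j, ∑ k, u i k * v j k = if i = j then 1 else 0)
    (h₂ : ∀ i j, ∑ k, v k i * u k j = if i = j then 1 else 0)
    (hrel : ∀ i j k l, u i j * u k l = (ε i k * η j l) • (u k l * u i j)) (i j k l : ι) :
    v i j * u k l = (ε i k * η j l) • (u k l * v i j) := by
  have h := (sum_sum_smul_mul_eq_row_side h₁ i j k l).symm.trans
    (sum_sum_smul_mul_eq_column_side hη h₂ hrel i j k l)
  rw [← one_smul ℤ (v i j * u k l), ← hε i k, mul_smul, h, smul_smul]

end TwistedUnitary

theorem neg_one_pow_mul_self (n : ℕ) : (-1 : ℤ) ^ n * (-1) ^ n = 1 := by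
  rw [← mul_pow, neg_one_mul, neg_neg, one_pow]

theorem stmt_19 (A : Type*) [Ring A] [StarRing A] (n : ℕ)
    (u : Fin n → Fin n → A)
    (hunit₁ : ∀ i j, ∑ k, u i k * star (u j k) = if i = j then 1 else 0)
    (hunit₂ : ∀ i j, ∑ k, star (u k i) * u k j = if i = j then 1 else 0)
    (hrel : ∀ i j k l, u i j * u k l =
      ((-1 : ℤ) ^ ((if i = k then 1 else 0) + (if j = l then 1 else 0) : ℕ)) •
        (u k l * u i j)) :
    ∀ i j k l, star (u i j) * u k l =
      ((-1 : ℤ) ^ ((if i = k then 1 else 0) + (if j = l then 1 else 0) : ℕ)) •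
        (u k l * star (u i j)) := by
  simp_rw [pow_add] at hrel ⊢
  exact mul_eq_smul_mul_of_twisted_unitary (fun _ _ => neg_one_pow_mul_self _)
    (fun _ _ => neg_one_pow_mul_self _) hunit₁ hunit₂ hrel
end
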